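/- arXiv:2405.14123 — 4 statements merged into one kernel-verified Lean document; each statement's English description precedes it below -/
import Mathlib

section
/- Let c ∈ ℂ^{ℤ_d×ℤ_d} satisfy (i) c_{jk} = ω^{-jk}·conj(c_{-j,-k}) for all j,k ∈ ℤ_d, (ii) c_{00} = 1, and (iii) |c_{jk}|² = 1/(d+1) for all (j,k) ≠ (0,0). Then the matrix Tc is Hermitian, trace(Tc) = 1, and trace((Tc)²) = 1 (equivalently, its eigenvalues λ_1,…,λ_d satisfy Σ_j λ_j = 1, Σ_j λ_j² = 1, and Σ_{j≠k} λ_j λ_k = 0). -/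
open Matrix Complex

/-- `ω = exp(2πi/d)`, a primitive `d`-th root of unity. -/
noncomputable def omegaRoot (d : ℕ) : ℂ := Complex.exp (2 * Real.pi * Complex.I / d)

/-- The cyclic shift matrix `S`, `S_{jk} = δ_{j,k+1}`. -/
def Smat (d : ℕ) [NeZero d] : Matrix (ZMod d) (ZMod d) ℂ :=
  Matrix.of fun j k => if j = k + 1 then 1 else 0

/-- The modulation matrix `Ω`, `Ω_{jk} = ω^j δ_{jk}`. -/
noncomputable def Omat (d : ℕ) [NeZero d] : Matrix (ZMod d) (ZMod d) ℂ :=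
  Matrix.of fun j k => if j = k then omegaRoot d ^ j.val else 0

/-- The reconstruction operator `T`, `Tc = (1/d) Σ_{j,k} c_{jk} (S^j Ω^k)^*`. -/
noncomputable def Trec (d : ℕ) [NeZero d] (c : Matrix (ZMod d) (ZMod d) ℂ) :
    Matrix (ZMod d) (ZMod d) ℂ :=
  (1 / (d : ℂ)) • ∑ j : ZMod d, ∑ k : ZMod d, c j k • (Smat d ^ j.val * Omat d ^ k.val)ᴴ

/-!
Writing `ψ = ZMod.stdAddChar`, so that `ω ^ n = ψ n`, the entries of `Tc` are
`(Tc)_{ab} = d⁻¹ · 𝓕(c_{b-a, ·})(a)`: each diagonal band of `Tc` is a discrete Fourier transform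
of a row of `c`. Condition (i) says that conjugating a row amounts to reflecting and modulating the
opposite row, and modulation is translation on the Fourier side, so `Tc` is Hermitian. The trace is
`d⁻¹ Σ_a 𝓕(c_{0,·})(a) = c_{00}` by Fourier inversion at `0`. Since `Tc` is Hermitian,
`trace((Tc)²) = Σ_{a,b} |(Tc)_{ab}|²`, which Parseval turns into `d⁻¹ Σ_{j,k} |c_{jk}|²`, and by
(ii) and (iii) that sum is `1 + (d² - 1)/(d + 1) = d`.
-/

namespace ZMod
open Finset
variable {N : ℕ} [NeZero N]

lemma star_stdAddChar (t : ZMod N) : star (stdAddChar t) = stdAddChar (-t) := by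
  rw [stdAddChar_apply, stdAddChar_apply, AddChar.map_neg_eq_inv, Circle.coe_inv_eq_conj]
  rfl

lemma star_dft_apply (x : ZMod N → ℂ) (b : ZMod N) :
    star (𝓕 x b) = 𝓕 (fun k ↦ star (x (-k))) b := by
  rw [dft_apply, dft_apply, star_sum, ← Equiv.sum_comp (Equiv.neg (ZMod N))]
  simp [star_stdAddChar]

lemma dft_stdAddChar_mul_apply (t : ZMod N) (x : ZMod N → ℂ) (b : ZMod N) :
    𝓕 (fun k ↦ stdAddChar (-(k * t)) * x k) b = 𝓕 x (b + t) := by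
  simp only [dft_apply, smul_eq_mul, ← mul_assoc, ← AddChar.map_add_eq_mul]
  congr! 3; ring

lemma sum_stdAddChar_mul_dft (x : ZMod N → ℂ) (k : ZMod N) :
    ∑ a, stdAddChar (a * k) * 𝓕 x a = N * x k := by
  conv_rhs => rw [← LinearEquiv.symm_apply_apply 𝓕 x, invDFT_apply]
  simp only [smul_eq_mul, ← mul_assoc, mul_inv_cancel₀ (NeZero.ne (N : ℂ)), one_mul]

lemma sum_star_dft_mul_dft (x y : ZMod N → ℂ) :
    ∑ a, star (𝓕 x a) * 𝓕 y a = N * ∑ k, star (x k) * y k :=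
  calc ∑ a, star (𝓕 x a) * 𝓕 y a
      = ∑ k, star (∑ a, stdAddChar (a * k) * 𝓕 x a) * y k := by
        simp only [dft_apply y, smul_eq_mul, mul_sum, star_sum, star_mul', star_stdAddChar,
          sum_mul]
        rw [sum_comm]
        refine sum_congr rfl fun k _ ↦ sum_congr rfl fun a _ ↦ ?_
        rw [mul_comm a k]
        ring
    _ = N * ∑ k, star (x k) * y k := by
        simp only [sum_stdAddChar_mul_dft, star_mul', star_natCast, mul_sum, mul_assoc]

end ZMod

open ZMod Finset

section WeylMatrices
variable {d : ℕ} [NeZero d]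

lemma omegaRoot_zpow (n : ℤ) : omegaRoot d ^ n = stdAddChar (n : ZMod d) := by
  rw [omegaRoot, ← Complex.exp_int_mul, stdAddChar_coe]
  ring_nf

lemma omegaRoot_pow_val (t : ZMod d) : omegaRoot d ^ t.val = stdAddChar t := by
  rw [← zpow_natCast, omegaRoot_zpow]
  simp

lemma Smat_pow_apply (m : ℕ) (a b : ZMod d) :
    (Smat d ^ m) a b = if a = b + m then 1 else 0 := by
  induction m generalizing b with
  | zero => simp [one_apply]
  | succ m ih =>
    rw [pow_succ, mul_apply]
    simp only [ih]
    simp only [Smat, of_apply, mul_ite, mul_one, mul_zero, sum_ite_eq', mem_univ, if_true]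
    rw [show b + 1 + (m : ZMod d) = b + (m + 1 : ℕ) by push_cast; ring]

lemma Omat_pow_val (k : ZMod d) : Omat d ^ k.val = diagonal fun a ↦ stdAddChar (k * a) := by
  have : Omat d = diagonal fun a ↦ stdAddChar a := by
    ext a b
    simp [Omat, diagonal, omegaRoot_pow_val]
  rw [this, diagonal_pow]
  congr 1; ext a
  simp [← AddChar.map_nsmul_eq_pow]

lemma conjTranspose_Smat_pow_mul_Omat_pow_apply (j k a b : ZMod d) :
    (Smat d ^ j.val * Omat d ^ k.val)ᴴ a b = if j = b - a then stdAddChar (-(k * a)) else 0 := by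
  rw [conjTranspose_apply, Omat_pow_val, mul_diagonal, Smat_pow_apply]
  have hcond : b = a + j ↔ j = b - a := by rw [eq_sub_iff_add_eq, add_comm, eq_comm]
  simp only [mul_comm k a]
  simp [hcond, star_stdAddChar, apply_ite star]

end WeylMatrices

section Reconstruction
variable {d : ℕ} [NeZero d] {c : Matrix (ZMod d) (ZMod d) ℂ}

lemma Trec_apply (c : Matrix (ZMod d) (ZMod d) ℂ) (a b : ZMod d) :
    Trec d c a b = (d : ℂ)⁻¹ * 𝓕 (c (b - a)) a := by
  simp only [Trec, Matrix.smul_apply, Matrix.sum_apply, conjTranspose_Smat_pow_mul_Omat_pow_apply,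
    smul_eq_mul, ite_mul, zero_mul, sum_ite_irrel, sum_const_zero, sum_ite_eq', mem_univ,
    if_true, dft_apply, one_div, mul_comm (c _ _)]

theorem Trec_isHermitian (hc : ∀ j k, star (c j k) = stdAddChar (j * k) * c (-j) (-k)) :
    (Trec d c).IsHermitian := by
  ext a b
  rw [conjTranspose_apply, Trec_apply, Trec_apply, star_mul', star_inv₀, star_natCast,
    star_dft_apply]
  have hreflect :
      (fun k ↦ star (c (a - b) (-k))) = fun k ↦ stdAddChar (-(k * (a - b))) * c (b - a) k := by
    ext k
    rw [hc, neg_sub, neg_neg]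
    congr 2; ring
  rw [hreflect, dft_stdAddChar_mul_apply, add_sub_cancel]

theorem trace_Trec : (Trec d c).trace = c 0 0 := by
  simp only [trace, Matrix.diag_apply, Trec_apply, sub_self, ← mul_sum]
  rw [← dft_apply_zero, dft_dft]
  dsimp only
  rw [neg_zero, smul_eq_mul, inv_mul_cancel_left₀ (NeZero.ne (d : ℂ))]

theorem trace_conjTranspose_Trec_mul_self :
    ((Trec d c)ᴴ * Trec d c).trace = (d : ℂ)⁻¹ * ∑ j, ∑ k, star (c j k) * c j k := by
  set T := Trec d c
  calc (Tᴴ * T).trace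
      = ∑ b, ∑ j, star (T b (j + b)) * T b (j + b) := by
        simp only [trace, Matrix.diag_apply, mul_apply, conjTranspose_apply]
        rw [sum_comm]
        exact sum_congr rfl fun b _ ↦ (Equiv.sum_comp (Equiv.addRight b) _).symm
    _ = ∑ j, (d : ℂ)⁻¹ * (d : ℂ)⁻¹ * ∑ b, star (𝓕 (c j) b) * 𝓕 (c j) b := by
        rw [sum_comm]
        simp only [T, Trec_apply, add_sub_cancel_right, star_mul', star_inv₀, star_natCast,
          mul_sum]
        refine sum_congr rfl fun j _ ↦ sum_congr rfl fun b _ ↦ ?_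
        ring
    _ = (d : ℂ)⁻¹ * ∑ j, ∑ k, star (c j k) * c j k := by
        simp only [sum_star_dft_mul_dft, mul_sum]
        refine sum_congr rfl fun j _ ↦ sum_congr rfl fun k _ ↦ ?_
        field_simp [NeZero.ne]

lemma sum_sq_norm_eq_dim (h2 : c 0 0 = 1)
    (h3 : ∀ j k : ZMod d, (j, k) ≠ (0, 0) → ‖c j k‖ ^ 2 = 1 / (d + 1)) :
    ∑ j, ∑ k, ‖c j k‖ ^ 2 = d := by
  rw [← Fintype.sum_prod_type', ← add_sum_erase _ _ (mem_univ (0, 0)), h2, norm_one, one_pow,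
    sum_congr rfl fun p hp ↦ h3 p.1 p.2 (ne_of_mem_erase hp), sum_const,
    card_erase_of_mem (mem_univ _), card_univ, Fintype.card_prod, ZMod.card, nsmul_eq_mul]
  have : 1 ≤ d * d := Nat.one_le_iff_ne_zero.2 (mul_ne_zero (NeZero.ne d) (NeZero.ne d))
  push_cast [this]
  field_simp
  ring

end Reconstruction

theorem stmt0_general (d : ℕ) [NeZero d] (c : Matrix (ZMod d) (ZMod d) ℂ)
    (h1 : ∀ j k : ZMod d,
      c j k = omegaRoot d ^ (-((j.val : ℤ) * (k.val : ℤ))) * (starRingEnd ℂ) (c (-j) (-k)))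
    (h2 : c 0 0 = 1)
    (h3 : ∀ j k : ZMod d, (j, k) ≠ (0, 0) → ‖c j k‖ ^ 2 = 1 / (d + 1)) :
    (Trec d c).IsHermitian ∧ (Trec d c).trace = 1 ∧ ((Trec d c) ^ 2).trace = 1 := by
  have hc : ∀ j k, star (c j k) = stdAddChar (j * k) * c (-j) (-k) := fun j k ↦ by
    rw [h1 j k, omegaRoot_zpow, star_mul', star_stdAddChar, ← Complex.star_def, star_star]
    push_cast [ZMod.natCast_val, ZMod.cast_id', id, neg_neg]
    rfl
  have herm := Trec_isHermitian hc
  have hnorm : ∑ j, ∑ k, star (c j k) * c j k = d := by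
    simp only [Complex.star_def, Complex.conj_mul']
    exact_mod_cast sum_sq_norm_eq_dim h2 h3
  refine ⟨herm, by rw [trace_Trec, h2], ?_⟩
  nth_rewrite 1 [sq, ← herm.eq]
  rw [trace_conjTranspose_Trec_mul_self, hnorm, inv_mul_cancel₀ (NeZero.ne (d : ℂ))]

theorem stmt0 (d : ℕ) [NeZero d] (hd : 2 ≤ d) (c : Matrix (ZMod d) (ZMod d) ℂ)
    (h1 : ∀ j k : ZMod d,
      c j k = omegaRoot d ^ (-((j.val : ℤ) * (k.val : ℤ))) * (starRingEnd ℂ) (c (-j) (-k)))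
    (h2 : c 0 0 = 1)
    (h3 : ∀ j k : ZMod d, (j, k) ≠ (0, 0) → ‖c j k‖ ^ 2 = 1 / (d + 1)) :
    (Trec d c).IsHermitian ∧ (Trec d c).trace = 1 ∧ ((Trec d c) ^ 2).trace = 1 :=
  stmt0_general d c h1 h2 h3
end

section
/- The operator √d·L has order dividing 4d: (√d·L)^{4d} = Id, the identity operator on ℂ^{ℤ_d×ℤ_d}. -/
open Matrix Complex

/-- `μ = exp(2πi/(2d))`. -/
noncomputable def muRoot (d : ℕ) : ℂ := Complex.exp (2 * Real.pi * Complex.I / (2 * d))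

/-- The Fourier matrix `F`, `F_{jk} = ω^{jk}/√d`. -/
noncomputable def Fmat (d : ℕ) [NeZero d] : Matrix (ZMod d) (ZMod d) ℂ :=
  Matrix.of fun j k => omegaRoot d ^ (j.val * k.val) / (Real.sqrt d : ℂ)

/-- The diagonal matrix `R`, `R_{jj} = μ^{j(j+d)}`. -/
noncomputable def Rmat (d : ℕ) [NeZero d] : Matrix (ZMod d) (ZMod d) ℂ :=
  Matrix.of fun j k => if j = k then muRoot d ^ (j.val * (j.val + d)) else 0

/-- The operator `L`, `Lc = (1/d) Σ_{j,k} c_{jk} S^{-j} Ω^{-k}`. -/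
noncomputable def Lop (d : ℕ) [NeZero d] (c : Matrix (ZMod d) (ZMod d) ℂ) :
    Matrix (ZMod d) (ZMod d) ℂ :=
  (1 / (d : ℂ)) • ∑ j : ZMod d, ∑ k : ZMod d, c j k • ((Smat d ^ j.val)⁻¹ * (Omat d ^ k.val)⁻¹)

/-! Write `ψ` for the standard additive character of `ℤ/d`, so that `√d • L = d^{-1/2} • P` with
`(P c) m n = ∑ k, ψ (-(n k)) c (n - m) k`. Composing `P` four times, the orthogonality of characters
collapses one of the summations, and `P⁴` turns out to be `d²` times left multiplication by the
matrix `U₁`, where `U_τ = F⁻¹ diag (ψ (-τ k²)) F` is the Fourier conjugate of a chirp. Hence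
`τ ↦ U_τ` is a homomorphism on `(ℤ/d, +)`, so `U₁ ^ d = U₀ = 1` and
`(√d • L)^{4d} = d^{-2d} (d² U₁)^d = 1`. -/

open Finset

section FourierCalculus

variable {R : Type*} [CommRing R] [Fintype R] {ψ : AddChar R ℂ}

variable (ψ) in
noncomputable def chirpMatrix (τ : R) : Matrix R R ℂ :=
  of fun m q => (Fintype.card R : ℂ)⁻¹ * ∑ k, ψ (k * (m - q) - τ * (k * k))

variable (ψ) in
noncomputable def shearDFT : Matrix R R ℂ →ₗ[ℂ] Matrix R R ℂ where
  toFun c := of fun m n => ∑ k, ψ (-(n * k)) * c (n - m) k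
  map_add' c c' := by
    ext
    simp only [of_apply, Matrix.add_apply, mul_add, sum_add_distrib]
  map_smul' r c := by
    ext
    simp only [of_apply, Matrix.smul_apply, smul_eq_mul, RingHom.id_apply, mul_sum, mul_left_comm]

lemma shearDFT_apply (c : Matrix R R ℂ) (m n : R) :
    shearDFT ψ c m n = ∑ k, ψ (-(n * k)) * c (n - m) k := rfl

lemma shearDFT_shearDFT_apply (c : Matrix R R ℂ) (m n : R) :
    shearDFT ψ (shearDFT ψ c) m n = ∑ p, ∑ l, ψ (-((p + n - m) * (n + l))) * c p l := by
  simp only [shearDFT_apply, mul_sum]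
  refine Fintype.sum_equiv (Equiv.subRight (n - m)) _ _ fun p => sum_congr rfl fun l _ => ?_
  rw [← mul_assoc, ← AddChar.map_add_eq_mul, Equiv.subRight_apply]
  congr 2
  ring

variable [DecidableEq R]

lemma sum_sum_mulShift_sub_mul (hψ : ψ.IsPrimitive) (G : R → ℂ) (b : R) :
    ∑ r, (∑ p, ψ (p * (r - b))) * G r = Fintype.card R * G b := by
  simp only [AddChar.sum_mulShift _ hψ, sub_eq_zero, apply_ite (Nat.cast : ℕ → ℂ), Nat.cast_zero,
    ite_mul, zero_mul, Fintype.sum_ite_eq']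

lemma chirpMatrix_zero (hψ : ψ.IsPrimitive) : chirpMatrix ψ 0 = 1 := by
  ext m q
  simp only [chirpMatrix, of_apply, zero_mul, sub_zero, AddChar.sum_mulShift _ hψ, sub_eq_zero,
    one_apply]
  split_ifs <;> simp

lemma chirpMatrix_mul (hψ : ψ.IsPrimitive) (σ τ : R) :
    chirpMatrix ψ σ * chirpMatrix ψ τ = chirpMatrix ψ (σ + τ) := by
  ext m q
  simp only [chirpMatrix, mul_apply, of_apply]
  have hsplit : ∀ k p k', ψ (k * (m - p) - σ * (k * k)) * ψ (k' * (p - q) - τ * (k' * k')) =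
      ψ (p * (k' - k)) * ψ (k * m - σ * (k * k) - k' * q - τ * (k' * k')) := by
    intro k p k'
    rw [← AddChar.map_add_eq_mul, ← AddChar.map_add_eq_mul]
    congr 1
    ring
  calc ∑ p, ((Fintype.card R : ℂ)⁻¹ * ∑ k, ψ (k * (m - p) - σ * (k * k))) *
        ((Fintype.card R : ℂ)⁻¹ * ∑ k', ψ (k' * (p - q) - τ * (k' * k')))
      = (Fintype.card R : ℂ)⁻¹ ^ 2 * ∑ k, ∑ k', (∑ p, ψ (p * (k' - k))) *
          ψ (k * m - σ * (k * k) - k' * q - τ * (k' * k')) := by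
        simp_rw [mul_mul_mul_comm _ (∑ k, _), sum_mul_sum, hsplit, ← mul_sum, sum_mul]
        rw [sq, sum_comm]
        exact congrArg _ (sum_congr rfl fun k _ => sum_comm)
    _ = _ := by
        simp_rw [sum_sum_mulShift_sub_mul hψ, mul_sum]
        refine sum_congr rfl fun k _ => ?_
        rw [show k * m - σ * (k * k) - k * q - τ * (k * k) = k * (m - q) - (σ + τ) * (k * k) by ring]
        field_simp

lemma chirpMatrix_pow (hψ : ψ.IsPrimitive) (τ : R) (n : ℕ) :
    chirpMatrix ψ τ ^ n = chirpMatrix ψ (n * τ) := by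
  induction n with
  | zero => rw [pow_zero, Nat.cast_zero, zero_mul, chirpMatrix_zero hψ]
  | succ n ih => rw [pow_succ, ih, chirpMatrix_mul hψ, Nat.cast_succ, add_one_mul]

lemma chirpMatrix_one_pow_card (hψ : ψ.IsPrimitive) :
    chirpMatrix ψ 1 ^ Fintype.card R = 1 := by
  rw [chirpMatrix_pow hψ, Nat.cast_card_eq_zero, zero_mul, chirpMatrix_zero hψ]

lemma shearDFT_pow_four (hψ : ψ.IsPrimitive) :
    shearDFT ψ ^ 4 = (Fintype.card R : ℂ) ^ 2 • LinearMap.mulLeft ℂ (chirpMatrix ψ 1) := by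
  ext1 c
  ext m n
  simp only [Module.End.pow_apply, Function.iterate_succ, Function.iterate_zero,
    Function.comp_apply, id, shearDFT_shearDFT_apply, LinearMap.smul_apply,
    LinearMap.mulLeft_apply, Matrix.smul_apply, mul_apply, chirpMatrix, of_apply, mul_sum]
  -- `p` enters only through the character `ψ (p * (r - n))`, whose sum over `p` forces `r = n`.
  have hsplit : ∀ p l q r,
      ψ (-((p + n - m) * (n + l))) * (ψ (-((q + l - p) * (l + r))) * c q r) =
        ψ (p * (r - n)) * (ψ (-((n - m) * (n + l)) - (q + l) * (l + r)) * c q r) := by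
    intro p l q r
    rw [← mul_assoc, ← mul_assoc, ← AddChar.map_add_eq_mul, ← AddChar.map_add_eq_mul]
    congr 2
    ring
  calc _ = ∑ l, ∑ q, ∑ r, (∑ p, ψ (p * (r - n))) *
          (ψ (-((n - m) * (n + l)) - (q + l) * (l + r)) * c q r) := by
        simp_rw [hsplit, sum_mul]
        rw [sum_comm]
        refine sum_congr rfl fun l _ => ?_
        rw [sum_comm]
        exact sum_congr rfl fun q _ => sum_comm
    _ = ∑ l, ∑ q, (Fintype.card R : ℂ) *
          (ψ ((n + l) * (m - q) - 1 * ((n + l) * (n + l))) * c q n) := by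
        simp_rw [sum_sum_mulShift_sub_mul hψ]
        congr! 5
        ring
    _ = _ := by
        rw [sum_comm, smul_eq_mul, mul_sum]
        refine sum_congr rfl fun q _ => ?_
        rw [← mul_sum, ← sum_mul, ← mul_sum,
          ← Equiv.sum_comp (Equiv.addLeft n) fun k => ψ (k * (m - q) - 1 * (k * k))]
        simp only [Equiv.coe_addLeft]
        field_simp

end FourierCalculus

section

variable {d : ℕ} [NeZero d]

lemma omegaRoot_pow_val_s11 (x : ZMod d) : omegaRoot d ^ x.val = ZMod.stdAddChar x := by
  rw [ZMod.stdAddChar_apply, ZMod.toCircle_apply, omegaRoot, ← Complex.exp_nat_mul]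
  congr 1
  ring

lemma Omat_eq_diagonal : Omat d = diagonal fun j => ZMod.stdAddChar j := by
  ext i j
  simp only [Omat, of_apply, diagonal_apply, omegaRoot_pow_val_s11]

lemma inv_Omat_pow_val (k : ZMod d) :
    (Omat d ^ k.val)⁻¹ = diagonal fun j => ZMod.stdAddChar (-(j * k)) := by
  refine inv_eq_left_inv ?_
  rw [Omat_eq_diagonal, diagonal_pow, diagonal_mul_diagonal, ← diagonal_one]
  congr 1
  funext j
  rw [Pi.pow_apply, ← AddChar.map_nsmul_eq_pow, ← AddChar.map_add_eq_mul, nsmul_eq_mul,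
    ZMod.natCast_zmod_val, mul_comm k, neg_add_cancel, AddChar.map_zero_eq_one]

lemma Smat_pow (a : ℕ) : Smat d ^ a = of fun i j => if i = j + (a : ZMod d) then 1 else 0 := by
  induction a with
  | zero => ext i j; simp [one_apply]
  | succ a ih =>
    ext i j
    rw [pow_succ, ih]
    simp only [Smat, mul_apply, of_apply, mul_ite, mul_one, mul_zero, Fintype.sum_ite_eq']
    rw [Nat.cast_succ, add_right_comm, add_assoc]

lemma inv_Smat_pow_val (j : ZMod d) :
    (Smat d ^ j.val)⁻¹ = of fun m n => if n = m + j then 1 else 0 := by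
  refine inv_eq_left_inv ?_
  ext m n
  simp only [Smat_pow, ZMod.natCast_zmod_val, mul_apply, of_apply, ite_mul, one_mul, zero_mul,
    Fintype.sum_ite_eq', add_left_inj, one_apply]

lemma Lop_apply (c : Matrix (ZMod d) (ZMod d) ℂ) (m n : ZMod d) :
    Lop d c m n = (d : ℂ)⁻¹ * ∑ k, ZMod.stdAddChar (-(n * k)) * c (n - m) k := by
  simp only [Lop, Matrix.smul_apply, Matrix.sum_apply, inv_Smat_pow_val, inv_Omat_pow_val,
    mul_diagonal, of_apply, smul_eq_mul, ite_mul, one_mul, zero_mul, mul_ite, mul_zero, one_div]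
  simp only [eq_comm (a := n), ← eq_sub_iff_add_eq']
  rw [sum_comm]
  simp only [Fintype.sum_ite_eq']
  exact congrArg _ (sum_congr rfl fun k _ => mul_comm _ _)

end

theorem stmt11_general (d : ℕ) [NeZero d] (c : Matrix (ZMod d) (ZMod d) ℂ) :
    (fun a => ((Real.sqrt d : ℝ) : ℂ) • Lop d a)^[4 * d] c = c := by
  have hψ := ZMod.isPrimitive_stdAddChar d
  have hsqrt : ((Real.sqrt d : ℝ) : ℂ) ^ 2 = d := by
    rw [← Complex.ofReal_pow, Real.sq_sqrt (Nat.cast_nonneg d), Complex.ofReal_natCast]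
  have hsqrt0 : ((Real.sqrt d : ℝ) : ℂ) ≠ 0 := by
    rw [Complex.ofReal_ne_zero, Real.sqrt_ne_zero']
    exact_mod_cast NeZero.pos d
  have hL : (fun a => ((Real.sqrt d : ℝ) : ℂ) • Lop d a) =
      ⇑(((Real.sqrt d : ℝ) : ℂ)⁻¹ • shearDFT ZMod.stdAddChar) := by
    funext a
    ext m n
    rw [LinearMap.smul_apply, Matrix.smul_apply, Matrix.smul_apply, Lop_apply, shearDFT_apply,
      smul_eq_mul, smul_eq_mul, ← mul_assoc, ← hsqrt]
    field_simp
  have hscale : (((Real.sqrt d : ℝ) : ℂ)⁻¹ ^ 4 * (Fintype.card (ZMod d) : ℂ) ^ 2) = 1 := by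
    rw [ZMod.card, ← hsqrt]
    field_simp
  have hchirp : chirpMatrix ZMod.stdAddChar 1 ^ d = (1 : Matrix (ZMod d) (ZMod d) ℂ) := by
    simpa only [ZMod.card] using chirpMatrix_one_pow_card hψ
  rw [hL, ← Module.End.coe_pow, pow_mul, smul_pow, shearDFT_pow_four hψ, smul_smul, hscale,
    one_smul, LinearMap.pow_mulLeft, hchirp, LinearMap.mulLeft_one, LinearMap.id_apply]

theorem stmt11 (d : ℕ) [NeZero d] (hd : 2 ≤ d) (c : Matrix (ZMod d) (ZMod d) ℂ) :
    (fun a => ((Real.sqrt d : ℝ) : ℂ) • Lop d a)^[4 * d] c = c :=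
  stmt11_general d c
end

section
/- Suppose c ∈ ℂ^{ℤ_d×ℤ_d} satisfies Tc = vv* for some v ∈ ℂ^d with v_0 ≠ 0. Then the symbols of c have the invariant ∏_{k∈ℤ_d} p_j(ω^k) = ∏_{k∈ℤ_d} p_0(ω^k) for every j ∈ ℤ_d. -/
open Matrix Complex

/-- The `j`-th symbol of `c`: `p_j(z) = Σ_r c_{-j,r} (ω^j z)^{-r}`. -/
noncomputable def symb (d : ℕ) [NeZero d] (c : Matrix (ZMod d) (ZMod d) ℂ)
    (j : ZMod d) (z : ℂ) : ℂ :=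
  ∑ r : ZMod d, c (-j) r * (omegaRoot d ^ j.val * z) ^ (-(r.val : ℤ))

section Aux
set_option linter.unusedSectionVars false
variable (d : ℕ) [NeZero d]

lemma omega_ne_zero : omegaRoot d ≠ 0 := Complex.exp_ne_zero _

lemma omega_pow_d : omegaRoot d ^ d = 1 := by
  rw [omegaRoot, ← Complex.exp_nat_mul]
  have hd : (d : ℂ) ≠ 0 := Nat.cast_ne_zero.mpr (NeZero.ne d)
  rw [show (d : ℂ) * (2 * Real.pi * Complex.I / d) = 2 * Real.pi * Complex.I by
    field_simp]
  exact Complex.exp_two_pi_mul_I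

lemma omega_conj : (starRingEnd ℂ) (omegaRoot d) = (omegaRoot d)⁻¹ := by
  rw [omegaRoot, ← Complex.exp_conj, ← Complex.exp_neg]
  congr 1
  simp [map_div₀, Complex.conj_I, Complex.conj_ofNat]
  ring

lemma omega_pow_mod {a b : ℕ} (h : a % d = b % d) : omegaRoot d ^ a = omegaRoot d ^ b := by
  have h1 : ∀ n : ℕ, omegaRoot d ^ n = omegaRoot d ^ (n % d) := by
    intro n
    conv_lhs => rw [← Nat.div_add_mod n d]
    rw [pow_add, pow_mul, omega_pow_d, one_pow, one_mul]
  rw [h1 a, h1 b, h]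

lemma Omat_diag : Omat d = Matrix.diagonal (fun j => omegaRoot d ^ j.val) := by
  ext a b
  by_cases h : a = b <;> simp [Omat, Matrix.diagonal, h]

lemma Spow (m : ℕ) (a b : ZMod d) :
    (Smat d ^ m) a b = if a = b + (m : ZMod d) then 1 else 0 := by
  induction m generalizing a b with
  | zero => simp [Matrix.one_apply]
  | succ n ih =>
    rw [pow_succ, Matrix.mul_apply]
    rw [Finset.sum_eq_single (b + 1)]
    · rw [ih, show Smat d (b+1) b = 1 by simp [Smat], mul_one]
      have : b + 1 + (n : ZMod d) = b + ((n : ℕ) + 1 : ℕ) := by push_cast; ring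
      rw [this]
    · intro x _ hx
      rw [show Smat d x b = 0 by simp [Smat]; intro hc; exact absurd hc hx, mul_zero]
    · simp

lemma SO_entry (m k : ℕ) (a b : ZMod d) :
    ((Smat d ^ m * Omat d ^ k)ᴴ) a b
      = (if b = a + (m : ZMod d) then 1 else 0) * (omegaRoot d ^ (a.val * k))⁻¹ := by
  rw [Matrix.conjTranspose_apply, Omat_diag, Matrix.diagonal_pow, Matrix.mul_diagonal,
    Spow]
  have hst : ∀ n : ℕ, star (omegaRoot d ^ n) = (omegaRoot d ^ n)⁻¹ := by
    intro n; rw [RCLike.star_def, map_pow, omega_conj, inv_pow]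
  simp only [Pi.pow_apply, star_mul', ← pow_mul, hst]
  congr 1
  rw [apply_ite (star : ℂ → ℂ)]
  simp

lemma trec_entry (c : Matrix (ZMod d) (ZMod d) ℂ) (a b : ZMod d) :
    Trec d c a b
      = (1 / (d : ℂ)) * ∑ k : ZMod d, c (b - a) k * (omegaRoot d ^ (a.val * k.val))⁻¹ := by
  rw [Trec, Matrix.smul_apply, smul_eq_mul]
  congr 1
  rw [Matrix.sum_apply]
  simp only [Matrix.sum_apply, Matrix.smul_apply, smul_eq_mul, SO_entry]
  rw [Finset.sum_eq_single (b - a)]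
  · have : (((b - a : ZMod d).val : ℕ) : ZMod d) = b - a := ZMod.natCast_rightInverse _
    simp [this]
  · intro x _ hx
    apply Finset.sum_eq_zero
    intro k _
    rw [if_neg, zero_mul, mul_zero]
    have : (((x : ZMod d).val : ℕ) : ZMod d) = x := ZMod.natCast_rightInverse _
    rw [this]
    intro hc
    exact hx (by rw [hc]; ring)
  · simp

lemma symb_eq_trec (c : Matrix (ZMod d) (ZMod d) ℂ) (j t : ZMod d) :
    symb d c j (omegaRoot d ^ t.val) = (d : ℂ) * Trec d c (j + t) t := by
  rw [trec_entry, symb]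
  have hd : (d : ℂ) ≠ 0 := Nat.cast_ne_zero.mpr (NeZero.ne d)
  rw [show t - (j + t) = -j by ring]
  rw [← mul_assoc, mul_one_div, div_self hd, one_mul]
  apply Finset.sum_congr rfl
  intro r _
  congr 1
  have : omegaRoot d ^ ((j + t).val * r.val) = omegaRoot d ^ ((j.val + t.val) * r.val) := by
    apply omega_pow_mod
    have h1 : (j + t).val % d = (j.val + t.val) % d := by
      rw [ZMod.val_add, Nat.mod_mod_of_dvd _ dvd_rfl]
    exact Nat.ModEq.mul_right _ h1
  rw [this, ← pow_add, _root_.zpow_neg, zpow_natCast, ← pow_mul]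

end Aux

theorem stmt17 (d : ℕ) [NeZero d] (hd : 2 ≤ d) (c : Matrix (ZMod d) (ZMod d) ℂ)
    (h : ∃ v : ZMod d → ℂ, Trec d c = Matrix.vecMulVec v (star v) ∧ v 0 ≠ 0) :
    ∀ j : ZMod d,
      ∏ k : ZMod d, symb d c j (omegaRoot d ^ k.val)
        = ∏ k : ZMod d, symb d c 0 (omegaRoot d ^ k.val) := by
  obtain ⟨v, hTc, hv0⟩ := h
  have key : ∀ j : ZMod d,
      ∏ k : ZMod d, symb d c j (omegaRoot d ^ k.val)
        = ((d : ℂ) ^ (Fintype.card (ZMod d))) * (∏ t : ZMod d, v t)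
            * ∏ t : ZMod d, star (v t) := by
    intro j
    calc ∏ k : ZMod d, symb d c j (omegaRoot d ^ k.val)
        = ∏ t : ZMod d, (d : ℂ) * (v (j + t) * star (v t)) := by
          apply Finset.prod_congr rfl
          intro t _
          rw [symb_eq_trec, hTc, Matrix.vecMulVec_apply, Pi.star_apply]
      _ = ((d : ℂ) ^ (Fintype.card (ZMod d))) * (∏ t : ZMod d, v (j + t))
            * ∏ t : ZMod d, star (v t) := by
          rw [Finset.prod_mul_distrib, Finset.prod_mul_distrib, Finset.prod_const,
            ← mul_assoc, Finset.card_univ]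
      _ = _ := by
          congr 2
          exact Fintype.prod_equiv (Equiv.addLeft j) _ _ (fun t => rfl)
  intro j
  rw [key j, key 0]
end

section
/- For every t, φ ∈ ℝ, the point w = e^{it} + e^{iφ} + e^{−i(t+φ)} (a sum z₁+z₂+z₃ of three unimodular complex numbers with z₁z₂z₃ = 1) lies on the line segment joining A = 2e^{−iφ/2} + e^{iφ} and B = −2e^{−iφ/2} + e^{iφ}: precisely, w = λA + (1−λ)B with λ = (cos(t + φ/2) + 1)/2 ∈ [0,1]. In particular, since A and B lie on the curve θ ↦ 2e^{iθ} + e^{−2iθ} (a 3-cusped hypocycloid, taking θ = −φ/2 and θ = π − φ/2), every such sum z₁+z₂+z₃ with |z₁|=|z₂|=|z₃|=1 and z₁z₂z₃=1 lies on a chord of this hypocycloid. -/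
/-!
Writing `z₁ = e^{it}` and `z₃ = e^{-i(t+φ)}` as `e^{±i(t+φ/2)} e^{-iφ/2}` gives
`z₁ + z₃ = 2 cos(t + φ/2) e^{-iφ/2}`, a real multiple in `[-2, 2]` of `e^{-iφ/2}`. Hence
`z₁ + z₂ + z₃` runs along the chord `e^{iφ} ± 2e^{-iφ/2}`, whose endpoints are the hypocycloid
points at `θ = -φ/2` and at `θ = π - φ/2` (there `e^{iθ}` changes sign and `e^{-2iθ}` does not).
-/

open Complex Real

noncomputable def deltoid (θ : ℝ) : ℂ :=
  2 * exp (I * θ) + exp (-2 * I * θ)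

theorem deltoid_neg_half (φ : ℝ) :
    deltoid (-(φ / 2)) = 2 * exp (-I * φ / 2) + exp (I * φ) := by
  unfold deltoid
  push_cast
  ring_nf

theorem deltoid_pi_sub_half (φ : ℝ) :
    deltoid (π - φ / 2) = -2 * exp (-I * φ / 2) + exp (I * φ) := by
  have h₁ : exp (I * ↑(π - φ / 2)) = -exp (-I * φ / 2) := by
    rw [show I * ↑(π - φ / 2) = -I * φ / 2 + π * I by push_cast; ring, exp_add_pi_mul_I]
  have h₂ : exp (-2 * I * ↑(π - φ / 2)) = exp (I * φ) := by
    rw [show -2 * I * ↑(π - φ / 2) = I * φ + (-1 : ℤ) * (2 * π * I) by push_cast; ring,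
      Complex.exp_add, exp_int_mul_two_pi_mul_I, mul_one]
  rw [deltoid, h₁, h₂]
  ring

theorem Complex.exp_mul_I_add_exp_neg_mul_I_add (t φ : ℂ) :
    exp (I * t) + exp (-I * (t + φ)) = 2 * cos (t + φ / 2) * exp (-I * φ / 2) := by
  rw [two_cos, add_mul, ← exp_add, ← exp_add]
  ring_nf

theorem stmt19 (t φ : ℝ) :
    ∃ lam : ℝ, lam = (Real.cos (t + φ / 2) + 1) / 2 ∧ 0 ≤ lam ∧ lam ≤ 1 ∧
    Complex.exp (Complex.I * t) + Complex.exp (Complex.I * φ)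
        + Complex.exp (-Complex.I * (t + φ))
      = (lam : ℂ) * (2 * Complex.exp (-Complex.I * φ / 2) + Complex.exp (Complex.I * φ))
        + ((1 : ℂ) - lam)
            * (-2 * Complex.exp (-Complex.I * φ / 2) + Complex.exp (Complex.I * φ)) ∧
    -- A is the hypocycloid point θ ↦ 2e^{iθ} + e^{-2iθ} at θ = -φ/2
    (2 * Complex.exp (-Complex.I * φ / 2) + Complex.exp (Complex.I * φ)
      = 2 * Complex.exp (Complex.I * (-(φ / 2) : ℝ))
        + Complex.exp (-2 * Complex.I * (-(φ / 2) : ℝ))) ∧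
    -- B is the hypocycloid point θ ↦ 2e^{iθ} + e^{-2iθ} at θ = π - φ/2
    (-2 * Complex.exp (-Complex.I * φ / 2) + Complex.exp (Complex.I * φ)
      = 2 * Complex.exp (Complex.I * ((Real.pi - φ / 2) : ℝ))
        + Complex.exp (-2 * Complex.I * ((Real.pi - φ / 2) : ℝ))) := by
  refine ⟨_, rfl, ?_, ?_, ?_, (deltoid_neg_half φ).symm, (deltoid_pi_sub_half φ).symm⟩
  · linarith [neg_one_le_cos (t + φ / 2)]
  · linarith [cos_le_one (t + φ / 2)]
  · rw [add_right_comm, exp_mul_I_add_exp_neg_mul_I_add]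
    push_cast
    ring
end
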